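/- A suffix item [β] is inserted in U_j (by the variant algorithm) if and only if at least one dotted item [A → α • β] is inserted in E_{i,j} (by the Earley algorithm) for some A, α, and i. -/

import Mathlib

/-! Formalization of Earley parsing and the Nederhof–Satta variant. -/

variable {T N : Type}

/-- A context-free grammar: a start nonterminal and a set of productions. -/
structure CFG (T N : Type) where
  initial : N
  rules : Set (N × List (Symbol T N))

/-- One rewriting step of the grammar. -/
def CFG.Produces (g : CFG T N) (u v : List (Symbol T N)) : Prop :=
  ∃ A α p q, (A, α) ∈ g.rules ∧ u = p ++ [Symbol.nonterminal A] ++ q ∧ v = p ++ α ++ q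

/-- The derivation relation ⇒* (reflexive-transitive closure of rewriting). -/
def CFG.Derives (g : CFG T N) : List (Symbol T N) → List (Symbol T N) → Prop :=
  Relation.ReflTransGen g.Produces

/-- The language of the grammar: { w | S ⇒* w }. -/
def CFG.language (g : CFG T N) : Set (List T) :=
  { w | g.Derives [Symbol.nonterminal g.initial] (w.map Symbol.terminal) }

/-- `inputSlice w i j` is the substring a_{i+1}⋯a_j of `w` (0-based: w[i..j)), as symbols. -/
def inputSlice (w : List T) (i j : ℕ) : List (Symbol T N) :=
  ((w.take j).drop i).map Symbol.terminal

/-- The least Earley table: `Earley g w A α β i j` means the dotted item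
[A → α • β] is inserted in E_{i,j}. -/
inductive Earley (g : CFG T N) (w : List T) :
    N → List (Symbol T N) → List (Symbol T N) → ℕ → ℕ → Prop where
  | init {α} : (g.initial, α) ∈ g.rules → Earley g w g.initial [] α 0 0
  | predict {B α A β i j γ} : Earley g w B α (Symbol.nonterminal A :: β) i j →
      (A, γ) ∈ g.rules → Earley g w A [] γ j j
  | scan {A α a β i j} : Earley g w A α (Symbol.terminal a :: β) i j →
      w[j]? = some a → Earley g w A (α ++ [Symbol.terminal a]) β i (j + 1)
  | complete {A α B β i k γ j} : Earley g w A α (Symbol.nonterminal B :: β) i k →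
      Earley g w B γ [] k j → (B, γ) ∈ g.rules →
      Earley g w A (α ++ [Symbol.nonterminal B]) β i j

mutual
  /-- Forward part of the variant: `VarU g w β j` means suffix item [β] ∈ U_j. -/
  inductive VarU (g : CFG T N) (w : List T) : List (Symbol T N) → ℕ → Prop where
    | init {α} : (g.initial, α) ∈ g.rules → VarU g w α 0
    | predict {A β j γ} : VarU g w (Symbol.nonterminal A :: β) j →
        (A, γ) ∈ g.rules → VarU g w γ j
    | scan {a β j} : VarU g w (Symbol.terminal a :: β) j → w[j]? = some a →
        VarU g w β (j + 1)
    | complete {B β k γ j} : VarU g w (Symbol.nonterminal B :: β) k → (B, γ) ∈ g.rules →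
        VarT g w γ k j → VarU g w β j

  /-- Backward part of the variant: `VarT g w β j m` means suffix item [β] ∈ T_{j,m}. -/
  inductive VarT (g : CFG T N) (w : List T) : List (Symbol T N) → ℕ → ℕ → Prop where
    | empty {m} : VarU g w [] m → VarT g w [] m m
    | scan {a β j m} : VarU g w (Symbol.terminal a :: β) j → w[j]? = some a →
        VarT g w β (j + 1) m → VarT g w (Symbol.terminal a :: β) j m
    | complete {B β k γ j m} : VarU g w (Symbol.nonterminal B :: β) k → (B, γ) ∈ g.rules →
        VarT g w γ k j → VarT g w β j m → VarT g w (Symbol.nonterminal B :: β) k m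
end

/-! An Earley item [A → α • β] ∈ E_{i,j} is witnessed in the variant by its suffix [β] ∈ U_j.
Soundness is an induction on the Earley table that also carries the fact that
[β] ∈ T_{j,m} implies [αβ] ∈ T_{i,m}. Completeness is a simultaneous induction on U and T,
reading [β] ∈ T_{j,m} as: every Earley item [A → α • β] ∈ E_{i,j} can be driven to
[A → αβ •] ∈ E_{i,m}. -/

section
variable {g : CFG T N} {w : List T}

theorem Earley.varU_and_varT_append {A : N} {α β : List (Symbol T N)} {i j : ℕ}
    (h : Earley g w A α β i j) :
    VarU g w β j ∧ ∀ m, VarT g w β j m → VarT g w (α ++ β) i m := by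
  induction h with
  | init hr => exact ⟨.init hr, fun _ hT => hT⟩
  | predict _ hr ih => exact ⟨.predict ih.1 hr, fun _ hT => hT⟩
  | scan _ ha ih =>
    refine ⟨.scan ih.1 ha, fun m hT => ?_⟩
    simpa using ih.2 m (.scan ih.1 ha hT)
  | complete _ _ hr ih ihγ =>
    have hγ := ihγ.2 _ (.empty ihγ.1)
    rw [List.append_nil] at hγ
    refine ⟨.complete ih.1 hr hγ, fun m hT => ?_⟩
    simpa using ih.2 m (.complete ih.1 hr hγ hT)

theorem Earley.varU {A : N} {α β : List (Symbol T N)} {i j : ℕ}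
    (h : Earley g w A α β i j) : VarU g w β j :=
  h.varU_and_varT_append.1

variable (g w) in
def EarleyFinishes (β : List (Symbol T N)) (j m : ℕ) : Prop :=
  ∀ A α i, Earley g w A α β i j → Earley g w A (α ++ β) [] i m

theorem Earley.complete_of_finishes {A B : N} {α β γ : List (Symbol T N)} {i k j : ℕ}
    (h : Earley g w A α (.nonterminal B :: β) i k) (hr : (B, γ) ∈ g.rules)
    (hγ : EarleyFinishes g w γ k j) : Earley g w A (α ++ [.nonterminal B]) β i j :=
  h.complete (by simpa using hγ B [] k (h.predict hr)) hr

mutual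
theorem VarU.exists_earley {β : List (Symbol T N)} {j : ℕ} :
    VarU g w β j → ∃ A α i, Earley g w A α β i j
  | .init hr => ⟨_, _, _, .init hr⟩
  | .predict hU hr =>
    let ⟨_, _, _, hE⟩ := hU.exists_earley
    ⟨_, _, _, hE.predict hr⟩
  | .scan hU ha =>
    let ⟨_, _, _, hE⟩ := hU.exists_earley
    ⟨_, _, _, hE.scan ha⟩
  | .complete hU hr hT =>
    let ⟨_, _, _, hE⟩ := hU.exists_earley
    ⟨_, _, _, hE.complete_of_finishes hr hT.earleyFinishes⟩

theorem VarT.earleyFinishes {β : List (Symbol T N)} {j m : ℕ} :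
    VarT g w β j m → EarleyFinishes g w β j m
  | .empty _ => fun _ _ _ hE => by simpa using hE
  | .scan _ ha hT => fun A α i hE => by
    simpa using hT.earleyFinishes A _ i (hE.scan ha)
  | .complete _ hr hγ hβ => fun A α i hE => by
    simpa using hβ.earleyFinishes A _ i (hE.complete_of_finishes hr hγ.earleyFinishes)
end

end

/-- [β] ∈ U_j iff [A → α • β] ∈ E_{i,j} for some A, α, i. -/
theorem variant_U_iff_earley (g : CFG T N) (w : List T)
    (β : List (Symbol T N)) (j : ℕ) :
    VarU g w β j ↔ ∃ A α i, Earley g w A α β i j :=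
  ⟨VarU.exists_earley, fun ⟨_, _, _, hE⟩ => hE.varU⟩
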